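/- arXiv:2010.09862 — 7 statements merged into one kernel-verified Lean document; each statement's English description precedes it below -/
import Mathlib

section
/- For every integer n ≥ 1 and every real number x, the n-th derivative of the inverse tangent function satisfies Dₓⁿ arctan(x) = ((-1)^{n+1} (n-1)! / (1+x²)ⁿ) · Σ_{k=0}^{⌊(n-1)/2⌋} C(n, 2k+1) (-1)ᵏ x^{n-2k-1}. -/
/-!
On the real line `1 / (1 + x ^ 2) = Im (x - i)⁻¹`, and the derivatives of `(z - i)⁻¹` are
`(-1)^m m! (z - i)^(-(m+1))`. Since `(x - i)⁻¹ = (x + i) / (1 + x ^ 2)`, the `(m+1)`-st derivative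
of `arctan` is `(-1)^m m! Im (x + i)^(m+1) / (1 + x ^ 2)^(m+1)`, and the binomial theorem
expands `Im (x + i)^(m+1)` into the odd-index sum `Σ C(m+1, 2k+1) (-1)^k x^(m-2k)`.
-/

open Complex Finset Nat

lemma I_pow_two_mul (k : ℕ) : I ^ (2 * k) = ((-1 : ℝ) ^ k : ℝ) := by
  rw [pow_mul, I_sq]; push_cast; rfl

lemma im_I_pow_two_mul (k : ℕ) : (I ^ (2 * k)).im = 0 := by
  rw [I_pow_two_mul, ofReal_im]

lemma im_I_pow_two_mul_add_one (k : ℕ) : (I ^ (2 * k + 1)).im = (-1) ^ k := by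
  rw [pow_succ, I_pow_two_mul, im_ofReal_mul, I_im, mul_one]

lemma iteratedDeriv_im_comp_ofReal {e : ℂ → ℂ}
    (he : ∀ k (x : ℝ), DifferentiableAt ℂ (deriv^[k] e) x) (n : ℕ) :
    iteratedDeriv n (fun x : ℝ => (e x).im) = fun x : ℝ => (deriv^[n] e x).im := by
  induction n with
  | zero => rfl
  | succ n ih =>
    ext x
    rw [iteratedDeriv_succ, ih, Function.iterate_succ_apply']
    exact (imCLM.hasFDerivAt.comp_hasDerivAt x (he n x).hasDerivAt.comp_ofReal).deriv

lemma ofReal_sub_I_inv (x : ℝ) : ((x : ℂ) - I)⁻¹ = ((1 + x ^ 2)⁻¹ : ℝ) * (x + I) := by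
  have h : (1 + (x : ℂ) ^ 2) ≠ 0 := by exact_mod_cast (by positivity : (1 + x ^ 2) ≠ 0)
  refine inv_eq_of_mul_eq_one_right ?_
  push_cast
  field_simp
  linear_combination -I_sq

section SubInv

variable {𝕜 : Type*} [NontriviallyNormedField 𝕜]

lemma iterate_deriv_sub_inv (a : 𝕜) (k : ℕ) :
    deriv^[k] (fun z : 𝕜 => (z - a)⁻¹) = fun z => (-1) ^ k * k ! * (z - a) ^ (-1 - k : ℤ) := by
  simpa using iter_deriv_inv_linear_sub k (1 : 𝕜) a

lemma differentiableAt_iterate_deriv_sub_inv {a z : 𝕜} (hz : z ≠ a) (k : ℕ) :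
    DifferentiableAt 𝕜 (deriv^[k] fun z : 𝕜 => (z - a)⁻¹) z := by
  rw [iterate_deriv_sub_inv]
  fun_prop (disch := exact Or.inl (sub_ne_zero.mpr hz))

end SubInv

lemma ofReal_ne_I (x : ℝ) : (x : ℂ) ≠ I := by
  intro h; simpa using congrArg im h

lemma iteratedDeriv_one_div_one_add_sq (m : ℕ) (x : ℝ) :
    iteratedDeriv m (fun x : ℝ => 1 / (1 + x ^ 2)) x =
      (-1) ^ m * m ! / (1 + x ^ 2) ^ (m + 1) * ((x + I) ^ (m + 1)).im := by
  have h_im : (fun x : ℝ => 1 / (1 + x ^ 2)) = fun x : ℝ => (((x : ℂ) - I)⁻¹).im := by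
    ext x
    rw [ofReal_sub_I_inv, im_ofReal_mul]
    simp
  have h_diff (k : ℕ) (y : ℝ) : DifferentiableAt ℂ (deriv^[k] fun z : ℂ => (z - I)⁻¹) y :=
    differentiableAt_iterate_deriv_sub_inv (ofReal_ne_I y) k
  have h_zpow : ((x : ℂ) - I) ^ (-1 - m : ℤ) =
      (((1 + x ^ 2)⁻¹ ^ (m + 1) : ℝ) : ℂ) * (x + I) ^ (m + 1) := by
    rw [show (-1 - m : ℤ) = -((m + 1 : ℕ) : ℤ) by push_cast; ring, zpow_neg, zpow_natCast,
      ← inv_pow, ofReal_sub_I_inv, mul_pow, ofReal_pow]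
  rw [h_im, iteratedDeriv_im_comp_ofReal h_diff, iterate_deriv_sub_inv]
  dsimp only
  rw [h_zpow, ← mul_assoc, show (-1) ^ m * m ! * (((1 + x ^ 2)⁻¹ ^ (m + 1) : ℝ) : ℂ) =
      (((-1) ^ m * m ! * (1 + x ^ 2)⁻¹ ^ (m + 1) : ℝ) : ℂ) by push_cast; ring,
    im_ofReal_mul, div_eq_mul_inv, inv_pow]

lemma im_ofReal_add_I_pow (n : ℕ) (hn : 1 ≤ n) (x : ℝ) :
    (((x : ℂ) + I) ^ n).im =
      ∑ k ∈ range ((n - 1) / 2 + 1),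
        (n.choose (2 * k + 1) : ℝ) * (-1) ^ k * x ^ (n - 2 * k - 1) := by
  have h_term (j : ℕ) : (I ^ j * (x : ℂ) ^ (n - j) * (n.choose j : ℂ)).im =
      (n.choose j : ℝ) * (I ^ j).im * x ^ (n - j) := by
    rw [show I ^ j * (x : ℂ) ^ (n - j) * (n.choose j : ℂ) =
      ((x ^ (n - j) * n.choose j : ℝ) : ℂ) * I ^ j by push_cast; ring, im_ofReal_mul]
    ring
  have h_even (j : ℕ) (hj : ¬Odd j) : (n.choose j : ℝ) * (I ^ j).im * x ^ (n - j) = 0 := by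
    obtain ⟨t, rfl⟩ := Nat.not_odd_iff_even.mp hj
    rw [← two_mul, im_I_pow_two_mul, mul_zero, zero_mul]
  rw [add_comm, add_pow, im_sum]
  simp_rw [h_term]
  rw [← sum_filter_of_ne fun j _ h => by_contra fun hj => h (h_even j hj)]
  refine sum_nbij' (· / 2) (2 * · + 1) ?_ ?_ ?_ ?_ ?_
  all_goals simp only [mem_filter, mem_range]
  · rintro _ ⟨hj, t, rfl⟩; omega
  · intro k hk; exact ⟨by omega, k, rfl⟩
  · rintro _ ⟨-, t, rfl⟩; omega
  · intro k _; omega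
  · rintro _ ⟨-, t, rfl⟩
    rw [im_I_pow_two_mul_add_one, show (2 * t + 1) / 2 = t by omega, Nat.sub_sub]

/-- For every integer `n ≥ 1` and every real `x`,
`Dₓⁿ arctan(x) = ((-1)^(n+1) (n-1)! / (1+x²)ⁿ) · Σ_{k=0}^{⌊(n-1)/2⌋} C(n,2k+1) (-1)ᵏ x^(n-2k-1)`. -/
theorem iteratedDeriv_arctan_eq_polynomial (n : ℕ) (hn : 1 ≤ n) (x : ℝ) :
    iteratedDeriv n Real.arctan x =
      ((-1) ^ (n + 1) * (Nat.factorial (n - 1) : ℝ) / (1 + x ^ 2) ^ n) *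
        ∑ k ∈ Finset.range ((n - 1) / 2 + 1),
          (n.choose (2 * k + 1) : ℝ) * (-1) ^ k * x ^ (n - 2 * k - 1) := by
  obtain ⟨m, rfl⟩ : ∃ m, n = m + 1 := ⟨n - 1, by omega⟩
  rw [iteratedDeriv_succ', Real.deriv_arctan, iteratedDeriv_one_div_one_add_sq,
    im_ofReal_add_I_pow (m + 1) hn, Nat.add_sub_cancel]
  ring
end

section
/- For every integer n ≥ 1 and every real number x with |x| < 1, the n-th derivative of the inverse hyperbolic tangent function satisfies Dₓⁿ arctanh(x) = ((n-1)! / (1-x²)ⁿ) · Σ_{k=0}^{⌊(n-1)/2⌋} C(n, 2k+1) x^{n-2k-1}. -/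
/-!
On `(-1, 1)` the derivative of `arctanh` is the partial fraction
`((x + 1)⁻¹ - (x - 1)⁻¹) / 2`, whose `(n - 1)`-st derivative is
`(-1)ⁿ⁻¹ (n - 1)! / 2 · ((x + 1)⁻ⁿ - (x - 1)⁻ⁿ)`. Over the common denominator `(1 - x²)ⁿ`
this becomes `(n - 1)! ((x + 1)ⁿ - (x - 1)ⁿ) / 2`, and the binomial theorem leaves exactly
the odd-index terms of `(x + 1)ⁿ`.
-/

open Nat

noncomputable def arctanh (x : ℝ) : ℝ := (1 / 2) * Real.log ((1 + x) / (1 - x))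

section OddBinomial

open Finset

variable {R : Type*} [CommRing R]

theorem two_mul_sum_odd_choose_mul_pow (n : ℕ) (x : R) :
    2 * ∑ k ∈ range ((n - 1) / 2 + 1), (n.choose (2 * k + 1) : R) * x ^ (n - 2 * k - 1) =
      (x + 1) ^ n - (x - 1) ^ n := by
  rcases Nat.eq_zero_or_pos n with rfl | hn
  · simp
  set t : ℕ → R := fun j => n.choose j * x ^ (n - j)
  have hodd :
      (range ((n - 1) / 2 + 1)).image (fun k => 2 * k + 1) = (range (n + 1)).filter Odd := by
    ext j
    simp only [mem_image, mem_range, mem_filter, Nat.odd_iff]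
    constructor
    · rintro ⟨k, hk, rfl⟩
      omega
    · rintro ⟨hj, hj_odd⟩
      exact ⟨j / 2, by omega, by omega⟩
  calc 2 * ∑ k ∈ range ((n - 1) / 2 + 1), (n.choose (2 * k + 1) : R) * x ^ (n - 2 * k - 1)
      = ∑ j ∈ (range ((n - 1) / 2 + 1)).image (fun k => 2 * k + 1), 2 * t j := by
        rw [sum_image fun a _ b _ h => by omega, mul_sum]
        simp only [t, Nat.sub_sub]
    _ = ∑ j ∈ range (n + 1), (1 - (-1) ^ j) * t j := by
        rw [hodd, sum_filter]
        refine sum_congr rfl fun j _ => ?_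
        rcases Nat.even_or_odd j with hj | hj
        · simp [hj.neg_one_pow, Nat.not_odd_iff_even.mpr hj]
        · rw [if_pos hj, hj.neg_one_pow]
          ring
    _ = (1 + x) ^ n - (-1 + x) ^ n := by
        simp only [add_pow, ← sum_sub_distrib, t]
        refine sum_congr rfl fun j _ => ?_
        ring
    _ = (x + 1) ^ n - (x - 1) ^ n := by ring

end OddBinomial

section InverseDerivatives

variable {𝕜 : Type*} [NontriviallyNormedField 𝕜]

theorem iteratedDeriv_inv_add_const (n : ℕ) (a x : 𝕜) :
    iteratedDeriv n (fun y => (y + a)⁻¹) x = (-1) ^ n * n ! * ((x + a) ^ (n + 1))⁻¹ := by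
  have h := congrFun (iter_deriv_inv_linear n (1 : 𝕜) a) x
  simp only [one_mul, one_pow, mul_one] at h
  rw [iteratedDeriv_eq_iterate, h, show (-1 - n : ℤ) = -((n + 1 : ℕ) : ℤ) by push_cast; ring,
    zpow_neg, zpow_natCast]

theorem iteratedDeriv_inv_sub_const (n : ℕ) (a x : 𝕜) :
    iteratedDeriv n (fun y => (y - a)⁻¹) x = (-1) ^ n * n ! * ((x - a) ^ (n + 1))⁻¹ := by
  simpa only [← sub_eq_add_neg] using iteratedDeriv_inv_add_const n (-a) x

end InverseDerivatives

theorem hasDerivAt_arctanh {x : ℝ} (hx : x ∈ Set.Ioo (-1) 1) :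
    HasDerivAt arctanh (((x + 1)⁻¹ - (x - 1)⁻¹) / 2) x := by
  have hp : 1 + x ≠ 0 := (by linarith [hx.1] : 0 < 1 + x).ne'
  have hm : 1 - x ≠ 0 := (by linarith [hx.2] : 0 < 1 - x).ne'
  have hquot := ((hasDerivAt_id' x).const_add 1).div ((hasDerivAt_id' x).const_sub 1) hm
  refine ((hquot.log (div_ne_zero hp hm)).const_mul (1 / 2)).congr_deriv ?_
  have hp' : x + 1 ≠ 0 := by rwa [add_comm]
  have hm' : x - 1 ≠ 0 := by rwa [← neg_ne_zero, neg_sub]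
  simp only [Pi.div_apply]
  field_simp
  ring

theorem iteratedDeriv_succ_arctanh {x : ℝ} (hx : x ∈ Set.Ioo (-1) 1) (m : ℕ) :
    iteratedDeriv (m + 1) arctanh x =
      (-1) ^ m * m ! / 2 * (((x + 1) ^ (m + 1))⁻¹ - ((x - 1) ^ (m + 1))⁻¹) := by
  have hderiv :
      Set.EqOn (deriv arctanh) (fun y => ((y + 1)⁻¹ - (y - 1)⁻¹) / 2) (Set.Ioo (-1) 1) :=
    fun y hy => (hasDerivAt_arctanh hy).deriv
  have hp : x + 1 ≠ 0 := (by linarith [hx.1] : 0 < x + 1).ne'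
  have hm : x - 1 ≠ 0 := (by linarith [hx.2] : x - 1 < 0).ne
  rw [iteratedDeriv_succ', hderiv.iteratedDeriv_of_isOpen isOpen_Ioo m hx, iteratedDeriv_div_const,
    iteratedDeriv_fun_sub (by fun_prop (disch := assumption)) (by fun_prop (disch := assumption)),
    iteratedDeriv_inv_add_const, iteratedDeriv_inv_sub_const]
  ring

/-- For every integer `n ≥ 1` and every real `x` with `|x| < 1`,
`Dₓⁿ arctanh(x) = ((n-1)! / (1-x²)ⁿ) · Σ_{k=0}^{⌊(n-1)/2⌋} C(n,2k+1) x^(n-2k-1)`. -/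
theorem iteratedDeriv_arctanh_eq_polynomial (n : ℕ) (hn : 1 ≤ n) (x : ℝ) (hx : |x| < 1) :
    iteratedDeriv n arctanh x =
      ((Nat.factorial (n - 1) : ℝ) / (1 - x ^ 2) ^ n) *
        ∑ k ∈ Finset.range ((n - 1) / 2 + 1),
          (n.choose (2 * k + 1) : ℝ) * x ^ (n - 2 * k - 1) := by
  obtain ⟨m, rfl⟩ := Nat.exists_eq_add_of_le' hn
  have hx' : x ∈ Set.Ioo (-1) 1 := abs_lt.mp hx
  have hp : x + 1 ≠ 0 := (by linarith [hx'.1] : 0 < x + 1).ne'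
  have hm : x - 1 ≠ 0 := (by linarith [hx'.2] : x - 1 < 0).ne
  have hsum := two_mul_sum_odd_choose_mul_pow (m + 1) x
  have hfac :
      (1 - x ^ 2) ^ (m + 1) = (-1) ^ (m + 1) * ((x + 1) ^ (m + 1) * (x - 1) ^ (m + 1)) := by
    rw [← mul_pow, ← mul_pow]
    ring
  have hsign : (-1 : ℝ) ^ m * (-1) ^ (m + 1) = -1 := by
    rw [← pow_add, Odd.neg_one_pow ⟨m, by ring⟩]
  rw [eq_div_of_mul_eq two_ne_zero ((mul_comm _ _).trans hsum), iteratedDeriv_succ_arctanh hx' m,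
    Nat.add_sub_cancel, hfac]
  field_simp
  linear_combination ((x - 1) ^ (m + 1) - (x + 1) ^ (m + 1)) * hsign
end

section
/- For every integer n ≥ 1 and every real number x, the n-th derivative of the inverse tangent function satisfies Dₓⁿ arctan(x) = ((-1)^{n+1} (n-1)! / (√(1+x²))^{n+1}) · U_{n-1}(x / √(1+x²)), where U_{n-1} is the (n−1)-st Chebyshev polynomial of the second kind evaluated at the real number x/√(1+x²). -/
/-!
Put `s = √(1 + x²)` and `u = x / s`, so that `1 - u² = 1 / s²`, `du/dx = 1 / s³` and
`ds/dx = u`. For a polynomial `P` this gives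
`d/dx (P(u) / sᵏ) = ((1 - u²) P'(u) - k u P(u)) / sᵏ⁺¹`,
and for `P = U_m`, `k = m + 2` the differential relation
`(1 - X²) U_m' = (m + 2) X U_m - (m + 1) U_{m+1}` collapses the numerator to `-(m + 1) U_{m+1}(u)`.
Starting from `arctan' = 1 / s²`, induction on the order of the derivative gives the formula.
-/

open Polynomial Polynomial.Chebyshev

theorem Polynomial.Chebyshev.one_sub_X_sq_mul_derivative_U_eq_poly_in_U (R : Type*) [CommRing R]
    (n : ℤ) :
    (1 - X ^ 2) * derivative (U R n) = (n + 2 : R[X]) * X * U R n - (n + 1 : R[X]) * U R (n + 1) := by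
  linear_combination add_one_mul_T_eq_poly_in_U (R := R) n + (n + 1 : R[X]) * U_eq_X_mul_U_add_T R n

theorem hasDerivAt_sqrt_one_add_sq (x : ℝ) :
    HasDerivAt (fun y => √(1 + y ^ 2)) (x / √(1 + x ^ 2)) x := by
  convert ((hasDerivAt_pow 2 x).const_add 1).sqrt (by positivity) using 1
  field_simp
  ring

theorem hasDerivAt_div_sqrt_one_add_sq (x : ℝ) :
    HasDerivAt (fun y => y / √(1 + y ^ 2)) (1 / √(1 + x ^ 2) ^ 3) x := by
  have hs : √(1 + x ^ 2) ≠ 0 := by positivity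
  refine ((hasDerivAt_id' x).fun_div (hasDerivAt_sqrt_one_add_sq x) hs).congr_deriv ?_
  field_simp
  rw [Real.sq_sqrt (by positivity)]
  ring

theorem one_sub_div_sqrt_one_add_sq_sq (x : ℝ) :
    1 - (x / √(1 + x ^ 2)) ^ 2 = 1 / √(1 + x ^ 2) ^ 2 := by
  have h : √(1 + x ^ 2) ^ 2 = 1 + x ^ 2 := Real.sq_sqrt (by positivity)
  field_simp
  linarith

theorem hasDerivAt_eval_div_sqrt_one_add_sq_div_pow (P : ℝ[X]) (k : ℕ) (x : ℝ) :
    HasDerivAt (fun y => P.eval (y / √(1 + y ^ 2)) / √(1 + y ^ 2) ^ k)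
      (((1 - X ^ 2) * derivative P - (k : ℝ[X]) * X * P).eval (x / √(1 + x ^ 2)) /
        √(1 + x ^ 2) ^ (k + 1)) x := by
  have hs : √(1 + x ^ 2) ≠ 0 := by positivity
  refine (((P.hasDerivAt _).comp x (hasDerivAt_div_sqrt_one_add_sq x)).fun_div
    ((hasDerivAt_sqrt_one_add_sq x).pow k) (pow_ne_zero k hs)).congr_deriv ?_
  simp only [Function.comp_apply, Pi.pow_apply, eval_sub, eval_mul, eval_pow, eval_X, eval_one,
    eval_natCast, one_sub_div_sqrt_one_add_sq_sq]
  rcases k with _ | k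
  · simp
    field_simp
  · rw [Nat.add_sub_cancel]
    field_simp
    push_cast
    ring

theorem iteratedDeriv_succ_arctan (m : ℕ) (x : ℝ) :
    iteratedDeriv (m + 1) Real.arctan x =
      (-1) ^ m * m.factorial * ((U ℝ m).eval (x / √(1 + x ^ 2)) / √(1 + x ^ 2) ^ (m + 2)) := by
  induction m generalizing x with
  | zero => simp [Real.deriv_arctan, Real.sq_sqrt (by positivity : (0 : ℝ) ≤ 1 + x ^ 2)]
  | succ m ih =>
    have hU : (1 - X ^ 2) * derivative (U ℝ m) - ((m + 2 : ℕ) : ℝ[X]) * X * U ℝ m =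
        -(((m + 1 : ℕ) : ℝ[X]) * U ℝ (m + 1 : ℕ)) := by
      rw [one_sub_X_sq_mul_derivative_U_eq_poly_in_U]
      push_cast
      ring
    rw [iteratedDeriv_succ, funext ih,
      ((hasDerivAt_eval_div_sqrt_one_add_sq_div_pow (U ℝ m) (m + 2) x).const_mul _).deriv, hU]
    simp only [eval_neg, eval_mul, eval_natCast, Nat.factorial_succ]
    push_cast
    ring

/-- For every integer `n ≥ 1` and every real `x`,
`Dₓⁿ arctan(x) = ((-1)^(n+1) (n-1)! / (√(1+x²))^(n+1)) · U_{n-1}(x/√(1+x²))`. -/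
theorem iteratedDeriv_arctan_eq_chebyshevU (n : ℕ) (hn : 1 ≤ n) (x : ℝ) :
    iteratedDeriv n Real.arctan x =
      ((-1) ^ (n + 1) * (Nat.factorial (n - 1) : ℝ) / (Real.sqrt (1 + x ^ 2)) ^ (n + 1)) *
        (Polynomial.Chebyshev.U ℝ ((n : ℤ) - 1)).eval (x / Real.sqrt (1 + x ^ 2)) := by
  obtain ⟨m, rfl⟩ := Nat.exists_eq_add_of_le' hn
  rw [iteratedDeriv_succ_arctan]
  push_cast
  simp only [add_sub_cancel_right]
  ring
end

section
/- For every integer n ≥ 1 and every real number x, the n-th derivative of the inverse tangent function satisfies Dₓⁿ arctan(x) = ((-1)^{n+1} (n-1)! · sg(x)^{n-1} / (√(1+x²))ⁿ) · sin(n · arcsin(1/√(1+x²))), where sg(x) = 1 if x ≥ 0 and sg(x) = −1 if x < 0. -/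
/-!
Since `arctan' x = 1 / (1 + x²) = Im (x - i)⁻¹`, the `n`-th derivative is
`Im ((-1)^(n-1) (n-1)! (x - i)⁻ⁿ)`. Writing `x + i = √(1+x²) e^{iθ}` with `θ = arg (x + i) ∈ (0, π)`
gives `Im (x - i)⁻ⁿ = sin (nθ) / √(1+x²)ⁿ`, and `θ` is `arcsin (1/√(1+x²))` for `x ≥ 0` and
`π - arcsin (1/√(1+x²))` for `x < 0`; the latter accounts for the sign `sg(x)^(n-1)`.
-/

open Complex

lemma ofReal_sub_ne_zero {w : ℂ} (hw : w.im ≠ 0) (x : ℝ) : (x : ℂ) - w ≠ 0 :=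
  fun h => hw (by simpa using congrArg im h)

lemma hasDerivAt_inv_ofReal_sub_pow_succ {w : ℂ} (hw : w.im ≠ 0) (n : ℕ) (x : ℝ) :
    HasDerivAt (fun y : ℝ => ((y : ℂ) - w)⁻¹ ^ (n + 1))
      (-(n + 1) * ((x : ℂ) - w)⁻¹ ^ (n + 2)) x := by
  have hne := ofReal_sub_ne_zero hw x
  have h : HasDerivAt (fun z : ℂ => (z - w)⁻¹ ^ (n + 1))
      ((n + 1 : ℕ) * ((x : ℂ) - w)⁻¹ ^ n * (-1 / ((x : ℂ) - w) ^ 2)) x :=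
    (((hasDerivAt_id _).sub_const w).inv hne).pow (n + 1)
  convert h.comp_ofReal using 1
  rw [neg_div, one_div, ← inv_pow]
  push_cast
  ring

lemma iteratedDeriv_im_inv_ofReal_sub {w : ℂ} (hw : w.im ≠ 0) (n : ℕ) :
    iteratedDeriv n (fun y : ℝ => (((y : ℂ) - w)⁻¹).im) =
      fun y : ℝ => ((-1) ^ n * n.factorial * ((y : ℂ) - w)⁻¹ ^ (n + 1)).im := by
  induction n with
  | zero => simp
  | succ n ih =>
    ext x
    rw [iteratedDeriv_succ, ih]
    have h := ((hasDerivAt_inv_ofReal_sub_pow_succ hw n x).const_mul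
      ((-1) ^ n * (n.factorial : ℂ)))
    refine (imCLM.hasFDerivAt.comp_hasDerivAt x h).deriv.trans ?_
    simp only [imCLM_apply, Nat.factorial_succ]
    push_cast
    congr 1
    ring

lemma im_inv_conj_pow (z : ℂ) (n : ℕ) :
    ((starRingEnd ℂ z)⁻¹ ^ n).im = ‖z‖⁻¹ ^ n * Real.sin (n * arg z) := by
  have hconj : starRingEnd ℂ z = ‖z‖ * exp (-(arg z * I)) := by
    conv_lhs => rw [← norm_mul_exp_arg_mul_I z]
    rw [map_mul, conj_ofReal, ← exp_conj, map_mul, conj_ofReal, conj_I, mul_neg]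
  rw [hconj, mul_inv, ← exp_neg, neg_neg, mul_pow, ← exp_nat_mul, ← ofReal_inv, ← ofReal_pow,
    ← mul_assoc, ← ofReal_natCast, ← ofReal_mul, im_ofReal_mul, exp_ofReal_mul_I_im]

lemma norm_ofReal_add_I (x : ℝ) : ‖(x : ℂ) + I‖ = √(1 + x ^ 2) := by
  simpa [add_comm] using norm_add_mul_I x 1

lemma arg_ofReal_add_I (x : ℝ) :
    arg ((x : ℂ) + I) =
      if 0 ≤ x then Real.arcsin (1 / √(1 + x ^ 2)) else Real.pi - Real.arcsin (1 / √(1 + x ^ 2)) := by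
  split_ifs with hx
  · rw [arg_of_re_nonneg (by simpa using hx), norm_ofReal_add_I]
    simp
  · rw [arg_of_re_neg_of_im_nonneg (by simpa using hx) (by simp), norm_ofReal_add_I]
    simp only [neg_add_rev, add_im, neg_im, I_im, ofReal_im, neg_zero, add_zero, neg_div, one_div,
      Real.arcsin_neg]
    ring

lemma sin_nat_mul_arg_ofReal_add_I (x : ℝ) (n : ℕ) :
    Real.sin (n * arg ((x : ℂ) + I)) =
      (if 0 ≤ x then (1 : ℝ) else -1) ^ (n - 1) * Real.sin (n * Real.arcsin (1 / √(1 + x ^ 2))) := by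
  rw [arg_ofReal_add_I]
  split_ifs with hx
  · simp
  · rcases n with _ | n
    · simp
    rw [mul_sub, Real.sin_nat_mul_pi_sub, Nat.add_sub_cancel, pow_succ]
    ring

lemma one_div_one_add_sq_eq_im (x : ℝ) : 1 / (1 + x ^ 2) = (((x : ℂ) - I)⁻¹).im := by
  simp only [one_div, inv_im, sub_im, ofReal_im, I_im, zero_sub, neg_neg, normSq_apply, sub_re,
    ofReal_re, I_re, sub_zero, mul_neg, mul_one, inv_inj]
  ring

lemma im_inv_ofReal_sub_I_pow (x : ℝ) (n : ℕ) :
    (((x : ℂ) - I)⁻¹ ^ n).im =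
      (if 0 ≤ x then (1 : ℝ) else -1) ^ (n - 1) / √(1 + x ^ 2) ^ n *
        Real.sin (n * Real.arcsin (1 / √(1 + x ^ 2))) := by
  have hconj : (x : ℂ) - I = starRingEnd ℂ ((x : ℂ) + I) := by
    simp [conj_ofReal, conj_I, sub_eq_add_neg]
  rw [hconj, im_inv_conj_pow, norm_ofReal_add_I, sin_nat_mul_arg_ofReal_add_I]
  ring

/-- For every integer `n ≥ 1` and every real `x`,
`Dₓⁿ arctan(x) = ((-1)^(n+1) (n-1)! sg(x)^(n-1) / (√(1+x²))ⁿ) · sin(n arcsin(1/√(1+x²)))`,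
where `sg(x) = 1` for `x ≥ 0` and `sg(x) = -1` for `x < 0`. -/
theorem iteratedDeriv_arctan_eq_sin_arcsin (n : ℕ) (hn : 1 ≤ n) (x : ℝ) :
    iteratedDeriv n Real.arctan x =
      ((-1) ^ (n + 1) * (Nat.factorial (n - 1) : ℝ) *
          (if 0 ≤ x then (1 : ℝ) else -1) ^ (n - 1) / (Real.sqrt (1 + x ^ 2)) ^ n) *
        Real.sin (n * Real.arcsin (1 / Real.sqrt (1 + x ^ 2))) := by
  obtain ⟨m, rfl⟩ := Nat.exists_eq_add_of_le' hn
  have hderiv : deriv Real.arctan = fun y : ℝ => (((y : ℂ) - I)⁻¹).im :=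
    Real.deriv_arctan.trans (funext one_div_one_add_sq_eq_im)
  have hreal : ((-1) ^ m * m.factorial : ℂ) = (((-1) ^ m * m.factorial : ℝ) : ℂ) := by push_cast; rfl
  rw [iteratedDeriv_succ', hderiv, iteratedDeriv_im_inv_ofReal_sub (by simp)]
  dsimp only
  rw [hreal, im_ofReal_mul, im_inv_ofReal_sub_I_pow, Nat.add_sub_cancel]
  ring
end

section
/- Let T : ℕ × ℕ → ℤ satisfy T(0,k) = 1 if k = 1 and T(0,k) = 0 otherwise; T(n,0) = T(n−1,1) for n ≥ 1; and T(n,k) = (k−1)·T(n−1,k−1) + (k+1)·T(n−1,k+1) for n ≥ 1, k ≥ 1. Then for every integer n ≥ 0 and every real number x with cos(x) ≠ 0, Dₓⁿ tan(x) = Σ_{k=0}^{⌊(n+1)/2⌋} T(n, n−2k+1) · tan(x)^{n−2k+1}. -/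
/-!
Since `tan' = 1 + tan ^ 2`, induction gives `Dⁿ tan = Pₙ ∘ tan` on `{cos ≠ 0}` for the integer
polynomials `P₀ = X`, `Pₙ₊₁ = (1 + X ^ 2) Pₙ'`. Comparing coefficients, `Pₙ₊₁` obeys the
recurrence of `T`, so `T (n, k)` is the `k`-th coefficient of `Pₙ`. Finally `Pₙ` has degree at
most `n + 1`, and its nonzero coefficients sit in degrees `k` with `n + k` odd, i.e. `k = n + 1 - 2 j`.
-/

open Polynomial

-- For `k = 0` the truncated `k - 1` makes the first summand vanish, as it should.
theorem Polynomial.coeff_one_add_X_sq_mul_derivative {R : Type*} [CommSemiring R] (p : R[X])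
    (k : ℕ) :
    ((1 + X ^ 2) * derivative p).coeff k
      = ((k - 1 : ℕ) : R) * p.coeff (k - 1) + ((k + 1 : ℕ) : R) * p.coeff (k + 1) := by
  rw [add_mul, one_mul, coeff_add, coeff_X_pow_mul', coeff_derivative, add_comm]
  rcases k with _ | _ | k
  · simp
  · simp; ring
  · simp [coeff_derivative]; ring

noncomputable def tanPoly : ℕ → ℤ[X]
  | 0 => X
  | n + 1 => (1 + X ^ 2) * derivative (tanPoly n)

theorem coeff_tanPoly_succ (n k : ℕ) :
    (tanPoly (n + 1)).coeff k = ((k - 1 : ℕ) : ℤ) * (tanPoly n).coeff (k - 1)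
      + ((k + 1 : ℕ) : ℤ) * (tanPoly n).coeff (k + 1) :=
  coeff_one_add_X_sq_mul_derivative _ _

theorem coeff_tanPoly_eq_zero_of_lt {n k : ℕ} (hk : n + 1 < k) : (tanPoly n).coeff k = 0 := by
  induction n generalizing k with
  | zero => exact coeff_X_of_ne_one (by omega)
  | succ n ih =>
    rw [coeff_tanPoly_succ, ih (by omega), ih (by omega), mul_zero, mul_zero, add_zero]

theorem natDegree_tanPoly_lt (n : ℕ) : (tanPoly n).natDegree < n + 2 :=
  Nat.lt_succ_of_le <| natDegree_le_iff_coeff_eq_zero.2 fun _ hk =>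
    coeff_tanPoly_eq_zero_of_lt (by exact_mod_cast hk)

theorem coeff_tanPoly_eq_zero_of_even {n k : ℕ} (hk : Even (n + k)) : (tanPoly n).coeff k = 0 := by
  rw [Nat.even_iff] at hk
  induction n generalizing k with
  | zero => exact coeff_X_of_ne_one (by omega)
  | succ n ih =>
    rcases k with _ | k
    · simp [coeff_tanPoly_succ, ih (k := 1) (by omega)]
    · rw [coeff_tanPoly_succ, ih (by omega), ih (by omega), mul_zero, mul_zero, add_zero]

theorem hasDerivAt_aeval_tan {R : Type*} [CommSemiring R] [Algebra R ℝ] (p : R[X]) {x : ℝ}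
    (hx : Real.cos x ≠ 0) :
    HasDerivAt (fun y => aeval (Real.tan y) p)
      (aeval (Real.tan x) ((1 + X ^ 2) * derivative p)) x := by
  have h := (p.hasDerivAt_aeval (Real.tan x)).comp x (Real.hasDerivAt_tan hx)
  rw [one_div, ← Real.inv_one_add_tan_sq hx, inv_inv] at h
  simpa [mul_comm, Function.comp_def] using h

theorem iteratedDeriv_tan_eq_aeval_tanPoly (n : ℕ) {x : ℝ} (hx : Real.cos x ≠ 0) :
    iteratedDeriv n Real.tan x = aeval (Real.tan x) (tanPoly n) := by
  induction n generalizing x with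
  | zero => simp [tanPoly]
  | succ n ih =>
    have hnhds : {y : ℝ | Real.cos y ≠ 0} ∈ nhds x :=
      (isOpen_compl_singleton.preimage Real.continuous_cos).mem_nhds hx
    rw [iteratedDeriv_succ, Filter.EventuallyEq.deriv_eq (Filter.eventually_of_mem hnhds fun y hy => ih hy),
      (hasDerivAt_aeval_tan _ hx).deriv, tanPoly]

theorem eq_coeff_tanPoly_of_recurrence (T : ℕ × ℕ → ℤ)
    (hT0 : ∀ k, T (0, k) = if k = 1 then 1 else 0)
    (hTn0 : ∀ n, 1 ≤ n → T (n, 0) = T (n - 1, 1))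
    (hTnk : ∀ n k, 1 ≤ n → 1 ≤ k →
      T (n, k) = ((k : ℤ) - 1) * T (n - 1, k - 1) + ((k : ℤ) + 1) * T (n - 1, k + 1))
    (n k : ℕ) : T (n, k) = (tanPoly n).coeff k := by
  induction n generalizing k with
  | zero => by_cases hk : k = 1 <;> simp [hT0, tanPoly, coeff_X, hk, Ne.symm]
  | succ n ih =>
    rw [coeff_tanPoly_succ, ← ih, ← ih]
    rcases k with _ | k
    · simp [hTn0]
    · simp [hTnk]

theorem Finset.sum_range_eq_sum_of_even_eq_zero {M : Type*} [AddCommMonoid M] (n : ℕ)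
    (f : ℕ → M) (hf : ∀ l, Even (n + l) → f l = 0) :
    ∑ l ∈ range (n + 2), f l = ∑ k ∈ range ((n + 1) / 2 + 1), f (n + 1 - 2 * k) := by
  have hinj : Set.InjOn (fun k => n + 1 - 2 * k) (range ((n + 1) / 2 + 1)) := fun a ha b hb h => by
    simp only [coe_range, Set.mem_Iio] at ha hb h
    omega
  rw [← sum_image hinj]
  refine (sum_subset (fun l hl => ?_) fun l hl' hl => hf l ?_).symm
  · simp only [mem_image, mem_range] at hl ⊢
    omega
  · simp only [mem_image, mem_range, not_exists, not_and] at hl' hl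
    rw [Nat.even_iff]
    by_contra h
    exact hl ((n + 1 - l) / 2) (by omega) (by omega)

/-- Higher derivatives of the tangent function as polynomials in `tan`, with the
tangent-polynomial coefficients `T` given by their recurrence. -/
theorem iteratedDeriv_tan_eq_sum (T : ℕ × ℕ → ℤ)
    (hT0 : ∀ k, T (0, k) = if k = 1 then 1 else 0)
    (hTn0 : ∀ n, 1 ≤ n → T (n, 0) = T (n - 1, 1))
    (hTnk : ∀ n k, 1 ≤ n → 1 ≤ k →
      T (n, k) = ((k : ℤ) - 1) * T (n - 1, k - 1) + ((k : ℤ) + 1) * T (n - 1, k + 1))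
    (n : ℕ) (x : ℝ) (hx : Real.cos x ≠ 0) :
    iteratedDeriv n Real.tan x =
      ∑ k ∈ Finset.range ((n + 1) / 2 + 1),
        (T (n, n + 1 - 2 * k) : ℝ) * Real.tan x ^ (n + 1 - 2 * k) := by
  have hT := eq_coeff_tanPoly_of_recurrence T hT0 hTn0 hTnk n
  rw [iteratedDeriv_tan_eq_aeval_tanPoly n hx, aeval_eq_sum_range' (natDegree_tanPoly_lt n)]
  simp only [zsmul_eq_mul, ← hT]
  refine Finset.sum_range_eq_sum_of_even_eq_zero n _ fun l hl => ?_
  rw [hT, coeff_tanPoly_eq_zero_of_even hl, Int.cast_zero, zero_mul]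
end

section
/- Let T : ℕ × ℕ → ℤ satisfy T(0,k) = 1 if k = 1 and T(0,k) = 0 otherwise; T(n,0) = T(n−1,1) for n ≥ 1; and T(n,k) = (k−1)·T(n−1,k−1) + (k+1)·T(n−1,k+1) for n ≥ 1, k ≥ 1. Then for every integer n ≥ 0 and every real number x with sin(x) ≠ 0, Dₓⁿ cot(x) = (−1)ⁿ · Σ_{k=0}^{⌊(n+1)/2⌋} T(n, n−2k+1) · cot(x)^{n−2k+1}. -/
/-!
Since `cot' = -(1 + cot²)`, induction gives `Dⁿ cot = (-1)ⁿ Pₙ(cot)` with `P₀ = X` and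
`Pₙ₊₁ = (1 + X²) Pₙ'`. Comparing coefficients of `(1 + X²) Pₙ'` shows that the coefficients of
`Pₙ` satisfy exactly the recurrence defining `T`. Moreover `Pₙ` has degree at most `n + 1` and
only monomials of the parity of `n + 1`, which leaves the exponents `n + 1 - 2k`.
-/

open Polynomial Finset

namespace Polynomial

variable {R : Type*} [CommSemiring R]

theorem coeff_one_add_X_sq_mul_derivative_zero (p : R[X]) :
    ((1 + X ^ 2) * derivative p).coeff 0 = p.coeff 1 := by
  simp [add_mul, coeff_derivative]

theorem coeff_one_add_X_sq_mul_derivative_succ (p : R[X]) (k : ℕ) :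
    ((1 + X ^ 2) * derivative p).coeff (k + 1) =
      ((k : R) + 2) * p.coeff (k + 2) + k * p.coeff k := by
  rw [add_mul, one_mul, coeff_add, coeff_X_pow_mul', coeff_derivative]
  rcases k with _ | k
  · rw [if_neg (by omega)]
    push_cast
    ring
  · rw [if_pos (by omega), coeff_derivative, show k + 1 + 1 - 2 + 1 = k + 1 by omega]
    push_cast
    ring

end Polynomial

noncomputable def cotDerivPoly : ℕ → ℤ[X]
  | 0 => X
  | n + 1 => (1 + X ^ 2) * derivative (cotDerivPoly n)

theorem natDegree_cotDerivPoly_le (n : ℕ) : (cotDerivPoly n).natDegree ≤ n + 1 := by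
  induction n with
  | zero => simp [cotDerivPoly]
  | succ n ih =>
    have h2 : (1 + X ^ 2 : ℤ[X]).natDegree ≤ 2 := by compute_degree
    have hD := natDegree_derivative_le (cotDerivPoly n)
    exact natDegree_mul_le.trans (by omega)

theorem coeff_cotDerivPoly_eq_zero_of_even {n k : ℕ} (h : Even (n + k)) :
    (cotDerivPoly n).coeff k = 0 := by
  induction n generalizing k with
  | zero => rw [cotDerivPoly, coeff_X, if_neg (by rintro rfl; simp at h)]
  | succ n ih =>
    rcases k with _ | k
    · rw [cotDerivPoly, coeff_one_add_X_sq_mul_derivative_zero, ih h]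
    · rw [cotDerivPoly, coeff_one_add_X_sq_mul_derivative_succ,
        ih (by rw [Nat.even_iff] at h ⊢; omega), ih (by rw [Nat.even_iff] at h ⊢; omega)]
      ring

theorem coeff_cotDerivPoly {T : ℕ × ℕ → ℤ} (hT0 : ∀ k, T (0, k) = if k = 1 then 1 else 0)
    (hTn0 : ∀ n, 1 ≤ n → T (n, 0) = T (n - 1, 1))
    (hTnk : ∀ n k, 1 ≤ n → 1 ≤ k →
      T (n, k) = ((k : ℤ) - 1) * T (n - 1, k - 1) + ((k : ℤ) + 1) * T (n - 1, k + 1))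
    (n k : ℕ) : (cotDerivPoly n).coeff k = T (n, k) := by
  induction n generalizing k with
  | zero => rw [cotDerivPoly, coeff_X, hT0]; simp only [eq_comm]
  | succ n ih =>
    rcases k with _ | k
    · rw [cotDerivPoly, coeff_one_add_X_sq_mul_derivative_zero, ih, hTn0 (n + 1) (by omega),
        Nat.add_sub_cancel]
    · rw [cotDerivPoly, coeff_one_add_X_sq_mul_derivative_succ, ih, ih,
        hTnk (n + 1) (k + 1) (by omega) (by omega)]
      simp only [Nat.add_sub_cancel]
      push_cast
      ring

theorem Finset.sum_range_eq_sum_range_sub_two_mul {M : Type*} [AddCommMonoid M] (f : ℕ → M)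
    (n : ℕ) (hf : ∀ j, Even (n + j) → f j = 0) :
    ∑ j ∈ range (n + 2), f j = ∑ k ∈ range ((n + 1) / 2 + 1), f (n + 1 - 2 * k) := by
  have hinj : Set.InjOn (fun k => n + 1 - 2 * k) (range ((n + 1) / 2 + 1)) := by
    intro a ha b hb hab
    simp only [coe_range, Set.mem_Iio] at ha hb hab
    omega
  rw [← sum_image hinj]
  refine (sum_subset (fun j hj => ?_) (fun j hj hj' => hf j ?_)).symm
  · obtain ⟨k, hk, rfl⟩ := mem_image.mp hj
    exact mem_range.mpr (by omega)
  · have hj := mem_range.mp hj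
    rw [Nat.even_iff]
    by_contra hodd
    exact hj' (mem_image.mpr ⟨(n + 1 - j) / 2, mem_range.mpr (by omega), by omega⟩)

theorem Real.hasDerivAt_cot {x : ℝ} (hx : Real.sin x ≠ 0) :
    HasDerivAt Real.cot (-(1 + Real.cot x ^ 2)) x := by
  have h := (Real.hasDerivAt_cos x).div (Real.hasDerivAt_sin x) hx
  rw [← show Real.cot = Real.cos / Real.sin from funext Real.cot_eq_cos_div_sin] at h
  refine h.congr_deriv ?_
  rw [Real.cot_eq_cos_div_sin]
  field_simp
  ring

theorem iteratedDeriv_cot (n : ℕ) {x : ℝ} (hx : Real.sin x ≠ 0) :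
    iteratedDeriv n Real.cot x = (-1) ^ n * aeval (Real.cot x) (cotDerivPoly n) := by
  induction n generalizing x with
  | zero => simp [cotDerivPoly]
  | succ n ih =>
    have heq : iteratedDeriv n Real.cot =ᶠ[nhds x]
        fun y => (-1) ^ n * aeval (Real.cot y) (cotDerivPoly n) := by
      filter_upwards [Real.continuous_sin.continuousAt.eventually_ne hx] with y hy
      exact ih hy
    have hderiv : HasDerivAt (fun y => (-1) ^ n * aeval (Real.cot y) (cotDerivPoly n))
        ((-1) ^ n * (aeval (Real.cot x) (derivative (cotDerivPoly n)) * -(1 + Real.cot x ^ 2))) x :=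
      (((cotDerivPoly n).hasDerivAt_aeval _).comp x (Real.hasDerivAt_cot hx)).const_mul _
    rw [iteratedDeriv_succ, heq.deriv_eq, hderiv.deriv, cotDerivPoly]
    simp only [map_mul, map_add, map_one, map_pow, aeval_X]
    ring

/-- Higher derivatives of the cotangent function as polynomials in `cot`, with the
tangent-polynomial coefficients `T` given by their recurrence. -/
theorem iteratedDeriv_cot_eq_sum (T : ℕ × ℕ → ℤ)
    (hT0 : ∀ k, T (0, k) = if k = 1 then 1 else 0)
    (hTn0 : ∀ n, 1 ≤ n → T (n, 0) = T (n - 1, 1))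
    (hTnk : ∀ n k, 1 ≤ n → 1 ≤ k →
      T (n, k) = ((k : ℤ) - 1) * T (n - 1, k - 1) + ((k : ℤ) + 1) * T (n - 1, k + 1))
    (n : ℕ) (x : ℝ) (hx : Real.sin x ≠ 0) :
    iteratedDeriv n Real.cot x =
      (-1) ^ n * ∑ k ∈ Finset.range ((n + 1) / 2 + 1),
        (T (n, n + 1 - 2 * k) : ℝ) * Real.cot x ^ (n + 1 - 2 * k) := by
  rw [iteratedDeriv_cot n hx,
    aeval_eq_sum_range' (Nat.lt_succ_of_le (natDegree_cotDerivPoly_le n)),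
    sum_range_eq_sum_range_sub_two_mul _ n fun j hj => by
      rw [coeff_cotDerivPoly_eq_zero_of_even hj, zero_smul]]
  simp only [coeff_cotDerivPoly hT0 hTn0 hTnk, zsmul_eq_mul]
end

section
/- Let T : ℕ × ℕ → ℤ satisfy T(0,k) = 1 if k = 1 and T(0,k) = 0 otherwise; T(n,0) = T(n−1,1) for n ≥ 1; and T(n,k) = (k−1)·T(n−1,k−1) + (k+1)·T(n−1,k+1) for n ≥ 1, k ≥ 1. Then for every integer n ≥ 0 and every real number x ≠ 0, Dₓⁿ coth(x) = (−1)ⁿ · Σ_{k=0}^{⌊(n+1)/2⌋} (−1)ᵏ T(n, n−2k+1) · coth(x)^{n−2k+1}. -/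
/-!
Since `coth' = 1 - coth²`, `Dⁿ coth = Qₙ(coth)` for the polynomials `Q₀ = X`,
`Qₙ₊₁ = (1 - X²) Qₙ'`. The tangent polynomials `Pₙ = ∑ⱼ T(n, j) Xʲ` obey `P₀ = X`,
`Pₙ₊₁ = (1 + X²) Pₙ'` (this is the recurrence for `T`), and the substitution `X ↦ iX` carries
one recursion into the other: `Qₙ(X) = -iⁿ⁺¹ Pₙ(iX)`. Hence the coefficient of `Xʲ` in `Qₙ` is
`-Re(iⁿ⁺¹⁺ʲ) T(n, j)`, which vanishes unless `j = n + 1 - 2k`, where it is `(-1)ⁿ⁺ᵏ T(n, j)`.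
-/

/-- The real hyperbolic cotangent function, `coth x = cosh x / sinh x`. -/
noncomputable def coth (x : ℝ) : ℝ := Real.cosh x / Real.sinh x

open Polynomial Complex Finset

theorem Finset.sum_range_succ_eq_sum_range_div_two_succ {M : Type*} [AddCommMonoid M] (m : ℕ)
    (f : ℕ → M) (hf : ∀ j ≤ m, Odd (m + j) → f j = 0) :
    ∑ j ∈ range (m + 1), f j = ∑ k ∈ range (m / 2 + 1), f (m - 2 * k) := by
  have hinj : Set.InjOn (fun k => m - 2 * k) (range (m / 2 + 1)) := by
    intro a ha b hb (h : m - 2 * a = m - 2 * b)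
    simp only [coe_range, Set.mem_Iio] at ha hb
    omega
  rw [← sum_image hinj]
  refine (sum_subset (fun j hj => ?_) fun j hj hj' => hf j ?_ ?_).symm
  · obtain ⟨k, hk, rfl⟩ := mem_image.1 hj
    simp only [mem_range] at hk ⊢
    omega
  · exact Nat.lt_succ_iff.1 (mem_range.1 hj)
  · rw [Nat.odd_iff]
    by_contra h
    rw [mem_range] at hj
    exact hj' (mem_image.2 ⟨(m - j) / 2, mem_range.2 (by omega), by omega⟩)

lemma hasDerivAt_coth {x : ℝ} (hx : x ≠ 0) : HasDerivAt coth (1 - coth x ^ 2) x := by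
  have hs : Real.sinh x ≠ 0 := Real.sinh_ne_zero.2 hx
  refine ((Real.hasDerivAt_cosh x).div (Real.hasDerivAt_sinh x) hs).congr_deriv ?_
  rw [coth]
  field_simp

noncomputable def tangentPoly : ℕ → ℤ[X]
  | 0 => X
  | n + 1 => (1 + X ^ 2) * derivative (tangentPoly n)

noncomputable def cothDerivPoly : ℕ → ℝ[X]
  | 0 => X
  | n + 1 => (1 - X ^ 2) * derivative (cothDerivPoly n)

lemma iteratedDeriv_coth_eq_eval (n : ℕ) {x : ℝ} (hx : x ≠ 0) :
    iteratedDeriv n coth x = (cothDerivPoly n).eval (coth x) := by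
  induction n generalizing x with
  | zero => simp [cothDerivPoly]
  | succ n ih =>
    have hev : iteratedDeriv n coth =ᶠ[nhds x] fun y => (cothDerivPoly n).eval (coth y) :=
      Filter.eventually_of_mem (isOpen_ne.mem_nhds hx) fun y hy => ih hy
    have hderiv : HasDerivAt (fun y => (cothDerivPoly n).eval (coth y)) _ x :=
      ((cothDerivPoly n).hasDerivAt (coth x)).comp x (hasDerivAt_coth hx)
    rw [iteratedDeriv_succ, hev.deriv_eq, hderiv.deriv, cothDerivPoly]
    simp only [eval_mul, eval_sub, eval_one, eval_pow, eval_X]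
    ring

lemma natDegree_cothDerivPoly_le (n : ℕ) : (cothDerivPoly n).natDegree ≤ n + 1 := by
  induction n with
  | zero => simp [cothDerivPoly]
  | succ n ih =>
    have h2 : (1 - X ^ 2 : ℝ[X]).natDegree ≤ 2 := by compute_degree
    calc _ ≤ 2 + (cothDerivPoly n).derivative.natDegree := natDegree_mul_le.trans (by simp [h2])
      _ ≤ n + 2 := by have := natDegree_derivative_le (cothDerivPoly n); omega

lemma map_cothDerivPoly (n : ℕ) : (cothDerivPoly n).map ofRealHom =
    -C (I ^ (n + 1)) * ((tangentPoly n).map (Int.castRingHom ℂ)).comp (C I * X) := by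
  have hI : (C I : ℂ[X]) ^ 2 = -1 := by rw [← C_pow, I_sq, C_neg, C_1]
  induction n with
  | zero =>
    simp only [cothDerivPoly, tangentPoly, map_X, X_comp, zero_add, pow_one]
    linear_combination X * hI
  | succ n ih =>
    set P := (tangentPoly n).map (Int.castRingHom ℂ)
    have hP : ((tangentPoly (n + 1)).map (Int.castRingHom ℂ)).comp (C I * X) =
        (1 + (C I * X) ^ 2) * (derivative P).comp (C I * X) := by
      simp [tangentPoly, P, derivative_map]
    rw [hP, cothDerivPoly, Polynomial.map_mul, ← derivative_map, ih, derivative_mul,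
      derivative_comp]
    simp only [Polynomial.map_sub, Polynomial.map_one, Polynomial.map_pow, map_X, derivative_neg,
      derivative_C,
      derivative_mul, derivative_X, mul_one, pow_succ I (n + 1), C_mul]
    linear_combination (X ^ 2 * C (I ^ (n + 1)) * C I * (derivative P).comp (C I * X)) * hI

lemma coeff_cothDerivPoly (n j : ℕ) :
    (cothDerivPoly n).coeff j = -(I ^ (n + 1 + j)).re * (tangentPoly n).coeff j := by
  have h := congrArg (fun p => (p.coeff j).re) (map_cothDerivPoly n)
  have hmul : -(I ^ (n + 1) * (((tangentPoly n).coeff j : ℤ) * I ^ j)) =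
      ((-(tangentPoly n).coeff j : ℝ) : ℂ) * I ^ (n + 1 + j) := by
    push_cast
    ring
  simp only [coeff_map, neg_mul, coeff_neg, coeff_C_mul, comp_C_mul_X_coeff, eq_intCast,
    ofRealHom_eq_coe, ofReal_re, hmul, re_ofReal_mul] at h
  rw [h]
  ring

lemma coeff_cothDerivPoly_of_odd {n j : ℕ} (h : Odd (n + 1 + j)) :
    (cothDerivPoly n).coeff j = 0 := by
  obtain ⟨m, hm⟩ := h
  rw [coeff_cothDerivPoly, hm, pow_succ, pow_mul, I_sq, ← ofReal_one, ← ofReal_neg, ← ofReal_pow,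
    mul_comm, re_ofReal_mul, I_re]
  ring

lemma coeff_cothDerivPoly_sub_two_mul {n k : ℕ} (hk : 2 * k ≤ n + 1) :
    (cothDerivPoly n).coeff (n + 1 - 2 * k) =
      (-1) ^ n * (-1) ^ k * (tangentPoly n).coeff (n + 1 - 2 * k) := by
  have hsign : (-1 : ℝ) ^ (n + 1 - k) * (-1) ^ k = (-1) ^ (n + 1) := by
    rw [← pow_add, Nat.sub_add_cancel (by omega)]
  have hsq : ((-1 : ℝ) ^ k) ^ 2 = 1 := by rw [← pow_mul, pow_mul', neg_one_sq, one_pow]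
  rw [coeff_cothDerivPoly, show n + 1 + (n + 1 - 2 * k) = 2 * (n + 1 - k) by omega, pow_mul,
    I_sq, ← ofReal_one, ← ofReal_neg, ← ofReal_pow, ofReal_re]
  set t : ℝ := ((tangentPoly n).coeff (n + 1 - 2 * k) : ℝ)
  linear_combination (-(-1) ^ k * t) * hsign + ((-1) ^ (n + 1 - k) * t) * hsq

lemma coeff_tangentPoly {T : ℕ × ℕ → ℤ} (hT0 : ∀ k, T (0, k) = if k = 1 then 1 else 0)
    (hTn0 : ∀ n, 1 ≤ n → T (n, 0) = T (n - 1, 1))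
    (hTnk : ∀ n k, 1 ≤ n → 1 ≤ k →
      T (n, k) = ((k : ℤ) - 1) * T (n - 1, k - 1) + ((k : ℤ) + 1) * T (n - 1, k + 1))
    (n j : ℕ) : (tangentPoly n).coeff j = T (n, j) := by
  induction n generalizing j with
  | zero => simp [tangentPoly, hT0, coeff_X, eq_comm]
  | succ n ih =>
    simp only [tangentPoly, add_mul, one_mul, coeff_add, coeff_X_pow_mul', coeff_derivative, ih]
    rcases j with _ | _ | j
    · rw [hTn0 _ le_add_self]
      simp
    · rw [hTnk _ _ le_add_self le_rfl]
      simp only [Nat.add_sub_cancel]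
      push_cast
      ring
    · rw [hTnk _ _ le_add_self (by omega)]
      simp only [Nat.add_sub_cancel]
      push_cast
      ring

/-- Higher derivatives of the hyperbolic cotangent function as polynomials in `coth`, with the
tangent-polynomial coefficients `T` given by their recurrence. -/
theorem iteratedDeriv_coth_eq_sum (T : ℕ × ℕ → ℤ)
    (hT0 : ∀ k, T (0, k) = if k = 1 then 1 else 0)
    (hTn0 : ∀ n, 1 ≤ n → T (n, 0) = T (n - 1, 1))
    (hTnk : ∀ n k, 1 ≤ n → 1 ≤ k →
      T (n, k) = ((k : ℤ) - 1) * T (n - 1, k - 1) + ((k : ℤ) + 1) * T (n - 1, k + 1))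
    (n : ℕ) (x : ℝ) (hx : x ≠ 0) :
    iteratedDeriv n coth x =
      (-1) ^ n * ∑ k ∈ Finset.range ((n + 1) / 2 + 1),
        (-1) ^ k * (T (n, n + 1 - 2 * k) : ℝ) * coth x ^ (n + 1 - 2 * k) := by
  rw [iteratedDeriv_coth_eq_eval n hx,
    eval_eq_sum_range' (Nat.lt_succ_of_le (natDegree_cothDerivPoly_le n)),
    sum_range_succ_eq_sum_range_div_two_succ _ _
      fun j _ hj => by rw [coeff_cothDerivPoly_of_odd hj, zero_mul],
    mul_sum]
  refine sum_congr rfl fun k hk => ?_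
  rw [coeff_cothDerivPoly_sub_two_mul (by rw [mem_range] at hk; omega),
    coeff_tangentPoly hT0 hTn0 hTnk]
  ring
end
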